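/- arXiv:1507.06681 — 3 statements merged into one kernel-verified Lean document; each statement's English description precedes it below -/
import Mathlib

section
/- Let a, b be real numbers with 1 < a < b. Then ∫_{1/a}^{a} x⁴/√((x²−a²)(x²−1/a²)(x²−b²)(x²−1/b²)) dx = ( 1/(b(b²−1)) )·( (1−b²+b⁴)·K( b(a²−1)/(a(b²−1)) ) − (b²−1)²·E( b(a²−1)/(a(b²−1)) ) ). (The polynomial (x²−a²)(x²−1/a²)(x²−b²)(x²−1/b²) is nonnegative for x ∈ [1/a, a], so the integrand is real.) -/
/-!
The integrand is invariant under `x ↦ x⁻¹` up to the Jacobian. With `v = x - x⁻¹`,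
`A = a - a⁻¹` and `B = b - b⁻¹`, the quartic under the root is `x⁴ (A² - v²)(B² - v²)` and
`dv = (1 + x⁻²) dx`, so the integral becomes `∫_{-A}^{A} w(v) / √((A² - v²)(B² - v²)) dv` with
`w(x - x⁻¹) = x⁴ / (x² + 1)`. Since `w(v) + w(-v) = 1 + v²`, folding at `0` leaves
`∫_0^A (1 + v²) / √((A² - v²)(B² - v²)) dv`, and `v = A t` turns this into
`(B + B⁻¹) K(A/B) - B E(A/B)`.
-/

open MeasureTheory Real

/-- Complete elliptic integral of the first kind. -/
noncomputable def ellipticK (k : ℝ) : ℝ :=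
  ∫ t in (0:ℝ)..1, 1 / Real.sqrt ((1 - t ^ 2) * (1 - k ^ 2 * t ^ 2))

/-- Complete elliptic integral of the second kind. -/
noncomputable def ellipticE (k : ℝ) : ℝ :=
  ∫ t in (0:ℝ)..1, Real.sqrt (1 - k ^ 2 * t ^ 2) / Real.sqrt (1 - t ^ 2)

/-- Lauricella hypergeometric function `F_D^(3)` (real arguments), via its
Euler integral representation. -/
noncomputable def FD3 (a b₁ b₂ b₃ c x₁ x₂ x₃ : ℝ) : ℝ :=
  Real.Gamma c / (Real.Gamma a * Real.Gamma (c - a)) *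
    ∫ u in (0:ℝ)..1,
      u ^ (a - 1) * (1 - u) ^ (c - a - 1) *
        (1 - x₁ * u) ^ (-b₁) * (1 - x₂ * u) ^ (-b₂) * (1 - x₃ * u) ^ (-b₃)

/-- Appell hypergeometric function `F₁` (real arguments), via its
Euler integral representation. -/
noncomputable def appellF1 (a b₁ b₂ c x y : ℝ) : ℝ :=
  Real.Gamma c / (Real.Gamma a * Real.Gamma (c - a)) *
    ∫ u in (0:ℝ)..1,
      u ^ (a - 1) * (1 - u) ^ (c - a - 1) * (1 - x * u) ^ (-b₁) * (1 - y * u) ^ (-b₂)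

/-- Lauricella hypergeometric function `F_D^(3)` (complex arguments), via its
Euler integral representation with principal branches. -/
noncomputable def FD3C (a b₁ b₂ b₃ c x₁ x₂ x₃ : ℂ) : ℂ :=
  Complex.Gamma c / (Complex.Gamma a * Complex.Gamma (c - a)) *
    ∫ u in (0:ℝ)..1,
      (u : ℂ) ^ (a - 1) * ((1 : ℂ) - (u : ℂ)) ^ (c - a - 1) *
        (1 - x₁ * (u : ℂ)) ^ (-b₁) * (1 - x₂ * (u : ℂ)) ^ (-b₂) *
        (1 - x₃ * (u : ℂ)) ^ (-b₃)

/-- Lauricella hypergeometric function `F_D^(4)` (complex arguments), via its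
Euler integral representation with principal branches. -/
noncomputable def FD4C (a b₁ b₂ b₃ b₄ c x₁ x₂ x₃ x₄ : ℂ) : ℂ :=
  Complex.Gamma c / (Complex.Gamma a * Complex.Gamma (c - a)) *
    ∫ u in (0:ℝ)..1,
      (u : ℂ) ^ (a - 1) * ((1 : ℂ) - (u : ℂ)) ^ (c - a - 1) *
        (1 - x₁ * (u : ℂ)) ^ (-b₁) * (1 - x₂ * (u : ℂ)) ^ (-b₂) *
        (1 - x₃ * (u : ℂ)) ^ (-b₃) * (1 - x₄ * (u : ℂ)) ^ (-b₄)

open Set intervalIntegral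

lemma intervalIntegrable_one_div_sqrt_sq_sub_sq {c : ℝ} (hc : 0 < c) :
    IntervalIntegrable (fun v => 1 / √(c ^ 2 - v ^ 2)) volume (-c) c := by
  refine intervalIntegrable_deriv_of_nonneg (g := fun v => arcsin (v / c)) (by fun_prop)
    (fun v hv => ?_) (fun v _ => by positivity)
  rw [min_eq_left (by linarith), max_eq_right (by linarith), mem_Ioo] at hv
  have hv' : v / c ∈ Ioo (-1) 1 := by
    rw [mem_Ioo, lt_div_iff₀ hc, div_lt_iff₀ hc]; constructor <;> linarith
  have hsqrt : √(c ^ 2 - v ^ 2) = c * √(1 - (v / c) ^ 2) := by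
    rw [← sqrt_sq hc.le, ← sqrt_mul (sq_nonneg c), sqrt_sq hc.le]
    congr 1; field_simp
  refine ((hasDerivAt_arcsin hv'.1.ne' hv'.2.ne).comp v ((hasDerivAt_id v).div_const c))
    |>.congr_deriv ?_
  rw [hsqrt]; field_simp

lemma intervalIntegrable_div_sqrt_sq_sub_sq_mul {c : ℝ} (hc : 0 < c) {f q : ℝ → ℝ}
    (hf : ContinuousOn f (Icc (-c) c)) (hq : ContinuousOn q (Icc (-c) c))
    (hq_pos : ∀ v ∈ Icc (-c) c, 0 < q v) :
    IntervalIntegrable (fun v => f v / √((c ^ 2 - v ^ 2) * q v)) volume (-c) c := by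
  have hIcc : uIcc (-c) c = Icc (-c) c := uIcc_of_le (by linarith)
  have hcont : ContinuousOn (fun v => f v / √(q v)) (uIcc (-c) c) := by
    rw [hIcc]
    exact hf.div (hq.sqrt) fun v hv => (sqrt_pos.2 (hq_pos v hv)).ne'
  refine ((intervalIntegrable_one_div_sqrt_sq_sub_sq hc).mul_continuousOn hcont).congr_uIoo
    fun v hv => ?_
  have hv : v ∈ Icc (-c) c := hIcc ▸ uIoo_subset_uIcc_self hv
  dsimp only
  rw [sqrt_mul' _ (hq_pos v hv).le]
  ring

lemma integral_eq_integral_add_comp_neg {f : ℝ → ℝ} {c : ℝ}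
    (hf : IntervalIntegrable f volume (-c) c) :
    ∫ v in -c..c, f v = ∫ v in 0..c, (f v + f (-v)) := by
  have h0 : (0 : ℝ) ∈ uIcc (-c) c := by
    rcases le_total 0 c with h | h
    · exact mem_uIcc.2 (Or.inl ⟨by linarith, h⟩)
    · exact mem_uIcc.2 (Or.inr ⟨h, by linarith⟩)
  have hleft : IntervalIntegrable f volume (-c) 0 := hf.mono_set (uIcc_subset_uIcc_left h0)
  have hright : IntervalIntegrable f volume 0 c := hf.mono_set (uIcc_subset_uIcc_right h0)
  have hneg : IntervalIntegrable (fun v => f (-v)) volume 0 c := by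
    simpa using ((IntervalIntegrable.iff_comp_neg (f := f)).1 hleft).symm
  rw [← integral_add_adjacent_intervals hleft hright, integral_add hright hneg,
    integral_comp_neg, neg_zero, add_comm]

lemma StrictMonoOn.image_Ioo_eq {f : ℝ → ℝ} {a b : ℝ} (hab : a ≤ b)
    (hf : StrictMonoOn f (Icc a b)) (hf_cont : ContinuousOn f (Icc a b)) :
    f '' Ioo a b = Ioo (f a) (f b) :=
  hf.image_Ioo_subset.antisymm (intermediate_value_Ioo hab hf_cont)

/-- The inverse of `x ↦ x - x⁻¹` on `(0, ∞)`, since `x - x⁻¹ = 2 sinh (log x)`. -/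
noncomputable def subInvSymm (v : ℝ) : ℝ := exp (arsinh (v / 2))

lemma subInvSymm_pos (v : ℝ) : 0 < subInvSymm v := exp_pos _

lemma continuous_subInvSymm : Continuous subInvSymm :=
  continuous_exp.comp (continuous_arsinh.comp (continuous_id.div_const 2))

lemma subInvSymm_sub_inv (v : ℝ) : subInvSymm v - (subInvSymm v)⁻¹ = v := by
  rw [subInvSymm, ← exp_neg, ← mul_div_cancel₀ (exp _ - _) (two_ne_zero' ℝ), ← sinh_eq,
    sinh_arsinh]
  ring

lemma subInvSymm_neg (v : ℝ) : subInvSymm (-v) = (subInvSymm v)⁻¹ := by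
  rw [subInvSymm, subInvSymm, neg_div, arsinh_neg, exp_neg]

lemma subInvSymm_sub_inv_self {x : ℝ} (hx : 0 < x) : subInvSymm (x - x⁻¹) = x := by
  have h : (x - x⁻¹) / 2 = sinh (log x) := by rw [sinh_eq, exp_neg, exp_log hx]
  rw [subInvSymm, h, arsinh_sinh, exp_log hx]

-- `subInvWeight (x - x⁻¹) = x⁴ / (x² + 1)`: the integrand's `x²` divided by the Jacobian `1 + x⁻²`.
noncomputable def subInvWeight (v : ℝ) : ℝ := subInvSymm v ^ 4 / (subInvSymm v ^ 2 + 1)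

lemma continuous_subInvWeight : Continuous subInvWeight :=
  (continuous_subInvSymm.pow 4).div (continuous_subInvSymm.pow 2 |>.add continuous_const)
    fun v => by positivity

lemma subInvWeight_add_neg (v : ℝ) : subInvWeight v + subInvWeight (-v) = 1 + v ^ 2 := by
  have hx := (subInvSymm_pos v).ne'
  rw [subInvWeight, subInvWeight, subInvSymm_neg]
  conv_rhs => rw [← subInvSymm_sub_inv v]
  field_simp
  ring

lemma integral_one_add_inv_sq_mul_comp_sub_inv {c : ℝ} (hc : 1 ≤ c) (g : ℝ → ℝ) :
    ∫ x in c⁻¹..c, (1 + (x ^ 2)⁻¹) * g (x - x⁻¹) = ∫ v in -(c - c⁻¹)..(c - c⁻¹), g v := by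
  have hc0 : 0 < c := by linarith
  have hle : c⁻¹ ≤ c := (inv_le_one_of_one_le₀ hc).trans hc
  have hpos : ∀ x ∈ Icc c⁻¹ c, 0 < x := fun x hx => (inv_pos.2 hc0).trans_le hx.1
  have hmono : StrictMonoOn (fun x : ℝ => x - x⁻¹) (Icc c⁻¹ c) := fun x hx y hy hxy => by
    have := inv_strictAnti₀ (hpos x hx) hxy
    dsimp only; linarith
  have hcont : ContinuousOn (fun x : ℝ => x - x⁻¹) (Icc c⁻¹ c) :=
    continuousOn_id.sub (continuousOn_inv₀.mono fun x hx => (hpos x hx).ne')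
  have himage := hmono.image_Ioo_eq hle hcont
  have hderiv : ∀ x ∈ Ioo c⁻¹ c,
      HasDerivWithinAt (fun x : ℝ => x - x⁻¹) (1 + (x ^ 2)⁻¹) (Ioo c⁻¹ c) x := fun x hx => by
    refine ((hasDerivAt_id' x).sub (hasDerivAt_inv (hpos x (Ioo_subset_Icc_self hx)).ne'))
      |>.hasDerivWithinAt.congr_deriv ?_
    ring
  rw [integral_of_le hle, integral_of_le (by linarith), integral_Ioc_eq_integral_Ioo,
    integral_Ioc_eq_integral_Ioo, show -(c - c⁻¹) = c⁻¹ - c⁻¹⁻¹ by rw [inv_inv]; ring, ← himage,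
    integral_image_eq_integral_abs_deriv_smul measurableSet_Ioo hderiv
      (hmono.injOn.mono Ioo_subset_Icc_self)]
  refine setIntegral_congr_fun measurableSet_Ioo fun x _ => ?_
  rw [smul_eq_mul, abs_of_pos (by positivity)]

lemma intervalIntegrable_ellipticK_integrand {k : ℝ} (hk : k ^ 2 < 1) :
    IntervalIntegrable (fun t => 1 / √((1 - t ^ 2) * (1 - k ^ 2 * t ^ 2))) volume 0 1 := by
  have h := intervalIntegrable_div_sqrt_sq_sub_sq_mul one_pos (f := fun _ => 1)
    (q := fun t => 1 - k ^ 2 * t ^ 2) continuousOn_const (by fun_prop) fun t ht => by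
      have : t ^ 2 ≤ 1 := sq_le_one_iff_abs_le_one t |>.2 (abs_le.2 ht)
      nlinarith
  simp only [one_pow] at h
  exact h.mono_set (uIcc_subset_uIcc_right (by simp))

lemma intervalIntegrable_ellipticE_integrand (k : ℝ) :
    IntervalIntegrable (fun t => √(1 - k ^ 2 * t ^ 2) / √(1 - t ^ 2)) volume 0 1 := by
  have h := (intervalIntegrable_one_div_sqrt_sq_sub_sq one_pos).continuousOn_mul
    (g := fun t => √(1 - k ^ 2 * t ^ 2)) (by fun_prop)
  simp only [one_pow, mul_one_div] at h
  exact h.mono_set (uIcc_subset_uIcc_right (by simp))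

lemma integral_one_add_sq_div_sqrt {A B : ℝ} (hA : 0 < A) (hAB : A < B) :
    ∫ v in (0 : ℝ)..A, (1 + v ^ 2) / √((A ^ 2 - v ^ 2) * (B ^ 2 - v ^ 2)) =
      (B + B⁻¹) * ellipticK (A / B) - B * ellipticE (A / B) := by
  have hB : 0 < B := hA.trans hAB
  set k := A / B with hk_def
  have hk : k ^ 2 < 1 := by
    rw [div_pow, div_lt_one (by positivity)]; exact pow_lt_pow_left₀ hAB hA.le two_ne_zero
  rw [ellipticK, ellipticE, ← intervalIntegral.integral_const_mul,
    ← intervalIntegral.integral_const_mul,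
    ← integral_sub ((intervalIntegrable_ellipticK_integrand hk).const_mul _)
      ((intervalIntegrable_ellipticE_integrand k).const_mul _)]
  have hscale := smul_integral_comp_mul_left
    (fun v => (1 + v ^ 2) / √((A ^ 2 - v ^ 2) * (B ^ 2 - v ^ 2))) A (a := 0) (b := 1)
  simp only [mul_zero, mul_one, smul_eq_mul] at hscale
  rw [← hscale, ← intervalIntegral.integral_const_mul]
  refine integral_congr fun t ht => ?_
  rw [uIcc_of_le zero_le_one] at ht
  have hkt : 0 < 1 - k ^ 2 * t ^ 2 := by
    have : t ^ 2 ≤ 1 := pow_le_one₀ ht.1 ht.2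
    nlinarith
  have hfactor : (A ^ 2 - (A * t) ^ 2) * (B ^ 2 - (A * t) ^ 2) =
      (A * B) ^ 2 * ((1 - t ^ 2) * (1 - k ^ 2 * t ^ 2)) := by
    rw [hk_def]; field_simp
  rw [hfactor, sqrt_mul (sq_nonneg _), sqrt_sq (by positivity), sqrt_mul' _ hkt.le]
  have hw := sq_sqrt hkt.le
  have hw0 := sqrt_pos.2 hkt
  generalize √(1 - k ^ 2 * t ^ 2) = w at hw hw0
  rcases eq_or_ne √(1 - t ^ 2) 0 with hu | hu
  · simp [hu]
  · rw [hk_def, div_pow] at hw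
    field_simp at hw ⊢
    linear_combination hw

lemma sq_sub_sq_mul_sq_sub_one_div_sq {x c : ℝ} (hx : x ≠ 0) (hc : c ≠ 0) :
    (x ^ 2 - c ^ 2) * (x ^ 2 - 1 / c ^ 2) = x ^ 2 * ((x - x⁻¹) ^ 2 - (c - c⁻¹) ^ 2) := by
  field_simp
  ring

lemma pow_four_div_sqrt_eq {a b x : ℝ} (ha : a ≠ 0) (hb : b ≠ 0) (hx : 0 < x) :
    x ^ 4 / √((x ^ 2 - a ^ 2) * (x ^ 2 - 1 / a ^ 2) * (x ^ 2 - b ^ 2) * (x ^ 2 - 1 / b ^ 2)) =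
      (1 + (x ^ 2)⁻¹) * (subInvWeight (x - x⁻¹) /
        √(((a - a⁻¹) ^ 2 - (x - x⁻¹) ^ 2) * ((b - b⁻¹) ^ 2 - (x - x⁻¹) ^ 2))) := by
  rw [mul_assoc _ (x ^ 2 - b ^ 2), sq_sub_sq_mul_sq_sub_one_div_sq hx.ne' ha,
    sq_sub_sq_mul_sq_sub_one_div_sq hx.ne' hb,
    show x ^ 2 * ((x - x⁻¹) ^ 2 - (a - a⁻¹) ^ 2) * (x ^ 2 * ((x - x⁻¹) ^ 2 - (b - b⁻¹) ^ 2)) =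
      (x ^ 2) ^ 2 * (((a - a⁻¹) ^ 2 - (x - x⁻¹) ^ 2) * ((b - b⁻¹) ^ 2 - (x - x⁻¹) ^ 2)) by ring,
    sqrt_mul (by positivity), sqrt_sq (by positivity), subInvWeight, subInvSymm_sub_inv_self hx]
  field_simp

theorem stmt_16 (a b : ℝ) (ha : 1 < a) (hab : a < b) :
    (∫ x in (1/a : ℝ)..a,
        x^4 / Real.sqrt ((x^2 - a^2) * (x^2 - 1/a^2) * (x^2 - b^2) * (x^2 - 1/b^2))) =
      (1/(b*(b^2 - 1))) *
        ((1 - b^2 + b^4) * ellipticK (b * (a^2 - 1) / (a * (b^2 - 1))) -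
          (b^2 - 1)^2 * ellipticE (b * (a^2 - 1) / (a * (b^2 - 1)))) := by
  have ha0 : 0 < a := by linarith
  have hb0 : 0 < b := by linarith
  have hA : 0 < a - a⁻¹ := sub_pos.2 ((inv_lt_one_of_one_lt₀ ha).trans ha)
  have hAB : a - a⁻¹ < b - b⁻¹ := sub_lt_sub hab (inv_strictAnti₀ ha0 hab)
  set A := a - a⁻¹
  set B := b - b⁻¹
  have hint : IntervalIntegrable
      (fun v => subInvWeight v / √((A ^ 2 - v ^ 2) * (B ^ 2 - v ^ 2))) volume (-A) A :=
    intervalIntegrable_div_sqrt_sq_sub_sq_mul hA continuous_subInvWeight.continuousOn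
      (by fun_prop) fun v hv => by
        have : v ^ 2 ≤ A ^ 2 := sq_le_sq' hv.1 hv.2
        nlinarith
  calc _ = ∫ x in a⁻¹..a, (1 + (x ^ 2)⁻¹) *
        (subInvWeight (x - x⁻¹) / √((A ^ 2 - (x - x⁻¹) ^ 2) * (B ^ 2 - (x - x⁻¹) ^ 2))) := by
        rw [one_div a]
        refine integral_congr fun x hx => pow_four_div_sqrt_eq ha0.ne' hb0.ne' ?_
        rw [uIcc_of_le ((inv_le_one_of_one_le₀ ha.le).trans ha.le)] at hx
        exact (inv_pos.2 ha0).trans_le hx.1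
    _ = ∫ v in -A..A, subInvWeight v / √((A ^ 2 - v ^ 2) * (B ^ 2 - v ^ 2)) :=
        integral_one_add_inv_sq_mul_comp_sub_inv ha.le
          fun v => subInvWeight v / √((A ^ 2 - v ^ 2) * (B ^ 2 - v ^ 2))
    _ = ∫ v in 0..A, (1 + v ^ 2) / √((A ^ 2 - v ^ 2) * (B ^ 2 - v ^ 2)) := by
        rw [integral_eq_integral_add_comp_neg hint]
        refine integral_congr fun v _ => ?_
        simp only [neg_sq, ← add_div, subInvWeight_add_neg]
    _ = (B + B⁻¹) * ellipticK (A / B) - B * ellipticE (A / B) :=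
        integral_one_add_sq_div_sqrt hA hAB
    _ = _ := by
        have hb1 : b ^ 2 - 1 ≠ 0 := by nlinarith
        have hk : A / B = b * (a ^ 2 - 1) / (a * (b ^ 2 - 1)) := by
          simp only [A, B]; field_simp
        rw [hk]
        simp only [B]
        field_simp
        ring
end

section
/- Let a, b, c, d be real numbers with 0 < a < b < c < d, and let s > −1 be real. Then ∫₀^{a} x^s/√((x²−a²)(x²−b²)(x²−c²)(x²−d²)) dx = ( a^s/(2bcd) )·( √π · Γ((s+1)/2)/Γ((s+2)/2) )·F_D^(3)( (1+s)/2; 1/2,1/2,1/2; (s+2)/2 | a²/b², a²/c², a²/d² ). (The polynomial (x²−a²)(x²−b²)(x²−c²)(x²−d²) is nonnegative for x ∈ [0,a], so the integrand is real.) -/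
open MeasureTheory Real

/-! The substitution `x = a √u` maps `(0, a)` onto `(0, 1)` and turns the radicand into
`a²(1 - u) · b²(1 - a²u/b²) · c²(1 - a²u/c²) · d²(1 - a²u/d²)`, so the integral becomes
the Euler integral of `F_D^(3)` whose last parameter exceeds the first by `1/2`; the Gamma
prefactors then cancel by `Γ(1/2) = √π`. -/

theorem integral_zero_eq_integral_comp_mul_sqrt {E : Type*} [NormedAddCommGroup E]
    [NormedSpace ℝ E] {a : ℝ} (ha : 0 < a) (f : ℝ → E) :
    ∫ x in (0:ℝ)..a, f x = ∫ u in (0:ℝ)..1, (a / (2 * √u)) • f (a * √u) := by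
  have himage : (fun u => a * √u) '' Set.Ioo 0 1 = Set.Ioo 0 a := by
    ext x
    constructor
    · rintro ⟨u, ⟨hu0, hu1⟩, rfl⟩
      have hsqrt : √u < 1 := (Real.sqrt_lt' one_pos).2 (by rwa [one_pow])
      exact ⟨mul_pos ha (Real.sqrt_pos.2 hu0), mul_lt_of_lt_one_right ha hsqrt⟩
    · rintro ⟨hx0, hxa⟩
      have hxa' : x / a < 1 := (div_lt_one ha).2 hxa
      refine ⟨(x / a) ^ 2,
        ⟨by positivity, pow_lt_one₀ (by positivity) hxa' two_ne_zero⟩, ?_⟩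
      show a * √((x / a) ^ 2) = x
      rw [Real.sqrt_sq (by positivity)]
      field_simp
  have hinj : Set.InjOn (fun u => a * √u) (Set.Ioo 0 1) := fun u hu v hv h =>
    (Real.sqrt_inj hu.1.le hv.1.le).1 (mul_left_cancel₀ ha.ne' h)
  have hderiv : ∀ u ∈ Set.Ioo (0:ℝ) 1,
      HasDerivWithinAt (fun u => a * √u) (a / (2 * √u)) (Set.Ioo 0 1) u := fun u hu =>
    ((Real.hasDerivAt_sqrt hu.1.ne').const_mul a).hasDerivWithinAt.congr_deriv
      (mul_one_div _ _)
  rw [intervalIntegral.integral_of_le ha.le, intervalIntegral.integral_of_le zero_le_one,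
    integral_Ioc_eq_integral_Ioo, integral_Ioc_eq_integral_Ioo, ← himage,
    integral_image_eq_integral_abs_deriv_smul measurableSet_Ioo hderiv hinj]
  refine setIntegral_congr_fun measurableSet_Ioo fun u hu => ?_
  have hsqrt : 0 < √u := Real.sqrt_pos.2 hu.1
  rw [abs_of_pos (by positivity)]

theorem one_sub_div_sq_mul_rpow_neg_half {k t u : ℝ} (hk : 0 < k) (h : t * u ≤ k ^ 2) :
    (1 - t / k ^ 2 * u) ^ (-(1/2:ℝ)) = k / √(k ^ 2 - t * u) := by
  have hdiv : 1 - t / k ^ 2 * u = (k ^ 2 - t * u) / k ^ 2 := by field_simp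
  rw [hdiv, Real.rpow_neg (div_nonneg (sub_nonneg.2 h) (sq_nonneg k)), ← Real.sqrt_eq_rpow,
    Real.sqrt_div' _ (sq_nonneg k), Real.sqrt_sq hk.le, inv_div]

theorem mul_sqrt_rpow {a u : ℝ} (ha : 0 ≤ a) (hu : 0 ≤ u) (s : ℝ) :
    (a * √u) ^ s = a ^ s * u ^ (s / 2) := by
  rw [Real.mul_rpow ha (Real.sqrt_nonneg u), Real.sqrt_eq_rpow, ← Real.rpow_mul hu,
    one_div_mul_eq_div]

theorem integrand_comp_mul_sqrt {a b c d s u : ℝ} (ha : 0 < a) (hab : a < b) (hac : a < c)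
    (had : a < d) (hu : u ∈ Set.Ioo (0:ℝ) 1) :
    a / (2 * √u) * ((a * √u) ^ s /
        √(((a * √u) ^ 2 - a ^ 2) * ((a * √u) ^ 2 - b ^ 2) * ((a * √u) ^ 2 - c ^ 2) *
          ((a * √u) ^ 2 - d ^ 2))) =
      a ^ s / (2 * b * c * d) *
        (u ^ ((1 + s) / 2 - 1) * (1 - u) ^ (-(1/2:ℝ)) * (1 - a ^ 2 / b ^ 2 * u) ^ (-(1/2:ℝ)) *
          (1 - a ^ 2 / c ^ 2 * u) ^ (-(1/2:ℝ)) * (1 - a ^ 2 / d ^ 2 * u) ^ (-(1/2:ℝ))) := by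
  obtain ⟨hu0, hu1⟩ := hu
  have hlt : ∀ k, a ≤ k → a ^ 2 * u < k ^ 2 := fun k hk => by
    nlinarith [mul_lt_mul_of_pos_left hu1 (pow_pos ha 2), pow_le_pow_left₀ ha.le hk 2]
  have hrad : ∀ k, a ≤ k → 0 < k ^ 2 - a ^ 2 * u := fun k hk => sub_pos.2 (hlt k hk)
  have hsq : (a * √u) ^ 2 = a ^ 2 * u := by rw [mul_pow, Real.sq_sqrt hu0.le]
  -- an even number of sign changes makes every factor of the radicand positive
  have hflip : (a ^ 2 * u - a ^ 2) * (a ^ 2 * u - b ^ 2) * (a ^ 2 * u - c ^ 2) * (a ^ 2 * u - d ^ 2)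
      = (a ^ 2 - a ^ 2 * u) * (b ^ 2 - a ^ 2 * u) * (c ^ 2 - a ^ 2 * u) * (d ^ 2 - a ^ 2 * u) := by
    ring
  have hone : 1 - u = 1 - a ^ 2 / a ^ 2 * u := by field_simp
  rw [hsq, hflip, Real.sqrt_mul' _ (hrad d had.le).le,
    Real.sqrt_mul' _ (hrad c hac.le).le, Real.sqrt_mul' _ (hrad b hab.le).le,
    mul_sqrt_rpow ha.le hu0.le,
    show (1 + s) / 2 - 1 = s / 2 - 1 / 2 by ring, Real.rpow_sub hu0, ← Real.sqrt_eq_rpow, hone,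
    one_sub_div_sq_mul_rpow_neg_half ha (hlt a le_rfl).le,
    one_sub_div_sq_mul_rpow_neg_half (ha.trans hab) (hlt b hab.le).le,
    one_sub_div_sq_mul_rpow_neg_half (ha.trans hac) (hlt c hac.le).le,
    one_sub_div_sq_mul_rpow_neg_half (ha.trans had) (hlt d had.le).le]
  have : 0 < √u := Real.sqrt_pos.2 hu0
  have := Real.sqrt_pos.2 (hrad a le_rfl)
  have := Real.sqrt_pos.2 (hrad b hab.le)
  have := Real.sqrt_pos.2 (hrad c hac.le)
  have := Real.sqrt_pos.2 (hrad d had.le)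
  have : b ≠ 0 := (ha.trans hab).ne'
  have : c ≠ 0 := (ha.trans hac).ne'
  have : d ≠ 0 := (ha.trans had).ne'
  field_simp

theorem stmt_18 (a b c d s : ℝ) (ha : 0 < a) (hab : a < b) (hbc : b < c) (hcd : c < d)
    (hs : -1 < s) :
    (∫ x in (0:ℝ)..a,
        x ^ s / Real.sqrt ((x^2 - a^2) * (x^2 - b^2) * (x^2 - c^2) * (x^2 - d^2))) =
      (a ^ s / (2*b*c*d)) * (Real.sqrt π * Real.Gamma ((s+1)/2) / Real.Gamma ((s+2)/2)) *
        FD3 ((1+s)/2) (1/2) (1/2) (1/2) ((s+2)/2) (a^2/b^2) (a^2/c^2) (a^2/d^2) := by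
  have hΓ : √π * Gamma ((s + 1) / 2) / Gamma ((s + 2) / 2) *
      (Gamma ((s + 2) / 2) / (Gamma ((1 + s) / 2) * Gamma (1 / 2))) = 1 := by
    have : 0 < Gamma ((s + 1) / 2) := Gamma_pos_of_pos (by linarith)
    have : 0 < Gamma ((s + 2) / 2) := Gamma_pos_of_pos (by linarith)
    rw [Gamma_one_half_eq, add_comm 1 s]
    field_simp
  rw [integral_zero_eq_integral_comp_mul_sqrt ha, FD3,
    show (s + 2) / 2 - (1 + s) / 2 - 1 = -(1/2:ℝ) by ring,
    show (s + 2) / 2 - (1 + s) / 2 = 1 / 2 by ring, mul_assoc, ← mul_assoc _ _ (∫ _ in _.._, _),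
    hΓ, one_mul, ← intervalIntegral.integral_const_mul]
  refine intervalIntegral.integral_congr_ae ?_
  filter_upwards [(Set.countable_singleton (1:ℝ)).ae_notMem volume] with u hu1 hu
  rw [Set.uIoc_of_le zero_le_one] at hu
  exact integrand_comp_mul_sqrt ha hab (hab.trans hbc) ((hab.trans hbc).trans hcd)
    ⟨hu.1, lt_of_le_of_ne hu.2 hu1⟩
end

section
/- Let a, b be complex numbers that are not real, and let s be a real number with −1 < s < 3 and s ≠ 1. Then ∫₀^{∞} x^s/√((x²−a²)(x²−ā²)(x²−b²)(x²−b̄²)) dx = ( π(1−s)/(4 cos(πs/2)) )·F_D^(4)( (3−s)/2; 1/2,1/2,1/2,1/2; 2 | 1+a², 1+ā², 1+b², 1+b̄² ), where ā, b̄ denote complex conjugates. (For real x, (x²−a²)(x²−ā²) = |x²−a²|² > 0 and (x²−b²)(x²−b̄²) = |x²−b²|² > 0, so the integrand is a positive real function; the Lauricella value is real since its arguments come in complex conjugate pairs.) -/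
open MeasureTheory Real

/-! The substitution `u = 1 / (1 + x ^ 2)` maps `(0, ∞)` onto `(0, 1)` with
`|du| = 2x / (1 + x²)² dx`, `(1 - u) / u = x²` and `1 - (1 + a²) u = (x² - a²) u`.
For real `x` and `0 ≤ u ≤ 1` the factors come in conjugate pairs, and when `Im a ≠ 0` the
number `1 - (1 + a²) u` never lies on the negative real axis, so the principal powers pair up
to absolute values: both integrals become the same positive real integral, up to a factor 2.
The constant comes from `Γ(2) / (Γ((3 - s)/2) Γ((1 + s)/2))` and the reflection formula
`Γ(1 + z) Γ(1 - z) = π z / sin (π z)` at `z = (1 - s)/2`.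
No integrability has to be checked: the change of variables formula holds for Bochner
integrals unconditionally. -/

open Set ComplexConjugate

theorem Complex.cpow_ofReal_mul_conj_cpow {z : ℂ} (hz : z.arg ≠ π) (r : ℝ) :
    z ^ (r : ℂ) * conj z ^ (r : ℂ) = ((‖z‖ ^ (2 * r) : ℝ) : ℂ) := by
  rw [Complex.conj_cpow z _ hz, Complex.conj_ofReal, Complex.mul_conj', Complex.norm_cpow_real,
    ← Complex.ofReal_pow, ← Real.rpow_natCast, ← Real.rpow_mul (norm_nonneg z), mul_comm r]
  norm_num

theorem Complex.arg_one_sub_one_add_sq_mul_ne_pi {a : ℂ} (ha : a.im ≠ 0) {u : ℝ}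
    (hu0 : 0 ≤ u) (hu1 : u ≤ 1) : (1 - (1 + a ^ 2) * u).arg ≠ π := by
  rw [Ne, Complex.arg_eq_pi_iff]
  rintro ⟨hre, him⟩
  simp only [Complex.sub_re, Complex.sub_im, Complex.mul_re, Complex.mul_im, Complex.add_re,
    Complex.add_im, Complex.one_re, Complex.one_im, Complex.ofReal_re, Complex.ofReal_im, sq]
    at hre him
  have hre_u : a.re * u = 0 := by
    have : a.im * (a.re * u) = 0 := by linarith
    simpa [ha] using this
  have hre_sq_u : a.re * a.re * u = 0 := by rw [mul_assoc, hre_u, mul_zero]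
  nlinarith [mul_nonneg (mul_self_nonneg a.im) hu0]

theorem Complex.ofReal_sq_cpow_one_div_two {t : ℝ} (ht : 0 ≤ t) :
    ((t ^ 2 : ℝ) : ℂ) ^ ((1 : ℂ) / 2) = t := by
  rw [show (1 : ℂ) / 2 = ((1 / 2 : ℝ) : ℂ) by norm_num, ← Complex.ofReal_cpow (sq_nonneg t),
    ← Real.sqrt_eq_rpow, Real.sqrt_sq ht]

theorem Real.Gamma_one_add_mul_Gamma_one_sub {z : ℝ} (hz : z ≠ 0) :
    Gamma (1 + z) * Gamma (1 - z) = π * z / sin (π * z) := by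
  rw [add_comm, Real.Gamma_add_one hz, mul_assoc, Real.Gamma_mul_Gamma_one_sub]
  ring

theorem Real.cos_pi_mul_div_two_ne_zero {s : ℝ} (hs1 : -1 < s) (hs3 : s < 3) (hs : s ≠ 1) :
    cos (π * s / 2) ≠ 0 := by
  rcases hs.lt_or_gt with h | h
  · exact (Real.cos_pos_of_mem_Ioo ⟨by nlinarith [pi_pos], by nlinarith [pi_pos]⟩).ne'
  · exact (Real.cos_neg_of_pi_div_two_lt_of_lt (by nlinarith [pi_pos])
      (by nlinarith [pi_pos])).ne

theorem image_inv_one_add_sq_Ioi : (fun x : ℝ => (1 + x ^ 2)⁻¹) '' Ioi 0 = Ioo 0 1 := by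
  ext u
  constructor
  · rintro ⟨x, hx, rfl⟩
    have : 1 < 1 + x ^ 2 := by have := pow_pos (mem_Ioi.1 hx) 2; linarith
    exact ⟨by positivity, inv_lt_one_of_one_lt₀ this⟩
  · rintro ⟨hu0, hu1⟩
    refine ⟨√((1 - u) / u), Real.sqrt_pos.2 (div_pos (by linarith) hu0), ?_⟩
    dsimp only
    rw [Real.sq_sqrt (div_pos (by linarith) hu0).le]
    field_simp
    ring

theorem integral_Ioo_zero_one_eq_integral_Ioi {E : Type*} [NormedAddCommGroup E]
    [NormedSpace ℝ E] (g : ℝ → E) :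
    ∫ u in Ioo (0 : ℝ) 1, g u =
      ∫ x in Ioi (0 : ℝ), (2 * x / (1 + x ^ 2) ^ 2) • g (1 + x ^ 2)⁻¹ := by
  have hderiv (x : ℝ) :
      HasDerivAt (fun x : ℝ => (1 + x ^ 2)⁻¹) (-(2 * x) / (1 + x ^ 2) ^ 2) x := by
    simpa using ((hasDerivAt_pow 2 x).const_add 1).fun_inv (by positivity)
  have hanti : StrictAntiOn (fun x : ℝ => (1 + x ^ 2)⁻¹) (Ioi 0) := fun x hx y hy hxy => by
    have : x ^ 2 < y ^ 2 := pow_lt_pow_left₀ hxy (le_of_lt hx) two_ne_zero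
    dsimp only
    gcongr
  rw [← image_inv_one_add_sq_Ioi, integral_image_eq_integral_abs_deriv_smul measurableSet_Ioi
    (fun x _ => (hderiv x).hasDerivWithinAt) hanti.injOn]
  refine setIntegral_congr_fun measurableSet_Ioi fun x hx => ?_
  rw [neg_div, abs_neg, abs_of_nonneg (by have := mem_Ioi.1 hx; positivity)]

theorem Complex.cpow_neg_half_mul_conj_one_sub_one_add_sq_mul {a : ℂ} (ha : a.im ≠ 0) {u : ℝ}
    (hu0 : 0 ≤ u) (hu1 : u ≤ 1) :
    (1 - (1 + a ^ 2) * u) ^ (-(1 / 2 : ℂ)) * (1 - (1 + conj a ^ 2) * u) ^ (-(1 / 2 : ℂ)) =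
      ((‖1 - (1 + a ^ 2) * u‖⁻¹ : ℝ) : ℂ) := by
  have hconj : 1 - (1 + conj a ^ 2) * u = conj (1 - (1 + a ^ 2) * (u : ℂ)) := by simp
  rw [hconj, show -(1 / 2 : ℂ) = ((-(1 / 2) : ℝ) : ℂ) by push_cast; ring,
    Complex.cpow_ofReal_mul_conj_cpow (Complex.arg_one_sub_one_add_sq_mul_ne_pi ha hu0 hu1)]
  norm_num [Real.rpow_neg_one]

theorem ofReal_cpow_div_prod_sq_sub_sq_cpow_half (a b : ℂ) {x : ℝ} (hx : 0 ≤ x) (s : ℝ) :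
    (x : ℂ) ^ (s : ℂ) /
        (((x : ℂ) ^ 2 - a ^ 2) * ((x : ℂ) ^ 2 - conj a ^ 2) *
          ((x : ℂ) ^ 2 - b ^ 2) * ((x : ℂ) ^ 2 - conj b ^ 2)) ^ ((1 : ℂ) / 2) =
      ((x ^ s / (‖(x : ℂ) ^ 2 - a ^ 2‖ * ‖(x : ℂ) ^ 2 - b ^ 2‖) : ℝ) : ℂ) := by
  have hconj (c : ℂ) : (x : ℂ) ^ 2 - conj c ^ 2 = conj ((x : ℂ) ^ 2 - c ^ 2) := by simp
  have hprod : ((x : ℂ) ^ 2 - a ^ 2) * ((x : ℂ) ^ 2 - conj a ^ 2) *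
      ((x : ℂ) ^ 2 - b ^ 2) * ((x : ℂ) ^ 2 - conj b ^ 2) =
      (((‖(x : ℂ) ^ 2 - a ^ 2‖ * ‖(x : ℂ) ^ 2 - b ^ 2‖) ^ 2 : ℝ) : ℂ) := by
    rw [hconj, hconj, mul_assoc _ ((x : ℂ) ^ 2 - b ^ 2), Complex.mul_conj', Complex.mul_conj']
    push_cast
    ring
  rw [hprod, Complex.ofReal_sq_cpow_one_div_two (by positivity), ← Complex.ofReal_cpow hx,
    Complex.ofReal_div]

theorem lauricella_integrand_eq {a b : ℂ} (ha : a.im ≠ 0) (hb : b.im ≠ 0) (s : ℝ) {u : ℝ}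
    (hu0 : 0 ≤ u) (hu1 : u ≤ 1) :
    (u : ℂ) ^ ((((3 - s) / 2 : ℝ) : ℂ) - 1) *
        (1 - (u : ℂ)) ^ (2 - (((3 - s) / 2 : ℝ) : ℂ) - 1) *
        (1 - (1 + a ^ 2) * u) ^ (-(1 / 2 : ℂ)) * (1 - (1 + conj a ^ 2) * u) ^ (-(1 / 2 : ℂ)) *
        (1 - (1 + b ^ 2) * u) ^ (-(1 / 2 : ℂ)) * (1 - (1 + conj b ^ 2) * u) ^ (-(1 / 2 : ℂ)) =
      ((u ^ ((1 - s) / 2) * (1 - u) ^ ((s - 1) / 2) /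
        (‖1 - (1 + a ^ 2) * u‖ * ‖1 - (1 + b ^ 2) * u‖) : ℝ) : ℂ) := by
  have hu : (u : ℂ) ^ ((((3 - s) / 2 : ℝ) : ℂ) - 1) = ((u ^ ((1 - s) / 2) : ℝ) : ℂ) := by
    rw [Complex.ofReal_cpow hu0]; push_cast; ring_nf
  have hv : (1 - (u : ℂ)) ^ (2 - (((3 - s) / 2 : ℝ) : ℂ) - 1) =
      (((1 - u) ^ ((s - 1) / 2) : ℝ) : ℂ) := by
    rw [Complex.ofReal_cpow (by linarith)]; push_cast; ring_nf
  rw [mul_assoc _ ((1 - (1 + b ^ 2) * u) ^ _), mul_assoc (_ * _) ((1 - (1 + a ^ 2) * u) ^ _),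
    Complex.cpow_neg_half_mul_conj_one_sub_one_add_sq_mul ha hu0 hu1,
    Complex.cpow_neg_half_mul_conj_one_sub_one_add_sq_mul hb hu0 hu1, hu, hv]
  push_cast
  ring

theorem Real.inv_rpow_mul_one_sub_inv_rpow_one_add_sq {x : ℝ} (hx : 0 < x) (r : ℝ) :
    ((1 + x ^ 2)⁻¹) ^ (-r) * (1 - (1 + x ^ 2)⁻¹) ^ r = x ^ (2 * r) := by
  have h1 : 1 - (1 + x ^ 2)⁻¹ = x ^ 2 * (1 + x ^ 2)⁻¹ := by field_simp; ring
  rw [h1, Real.mul_rpow (by positivity) (by positivity), Real.rpow_neg (by positivity),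
    ← Real.rpow_natCast, ← Real.rpow_mul hx.le]
  field_simp
  ring_nf

theorem norm_one_sub_one_add_sq_mul_inv_one_add_sq (a : ℂ) (x : ℝ) :
    ‖1 - (1 + a ^ 2) * (((1 + x ^ 2)⁻¹ : ℝ) : ℂ)‖ =
      ‖(x : ℂ) ^ 2 - a ^ 2‖ / (1 + x ^ 2) := by
  have h : 1 - (1 + a ^ 2) * (((1 + x ^ 2)⁻¹ : ℝ) : ℂ) =
      ((x : ℂ) ^ 2 - a ^ 2) * (((1 + x ^ 2)⁻¹ : ℝ) : ℂ) := by
    have : (1 + (x : ℂ) ^ 2) ≠ 0 := by exact_mod_cast (by positivity : (1 + x ^ 2) ≠ 0)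
    push_cast
    field_simp
    ring
  rw [h, norm_mul, Complex.norm_real, Real.norm_of_nonneg (by positivity), div_eq_mul_inv]

theorem abs_deriv_mul_lauricella_weight_eq (a b : ℂ) (s : ℝ) {x : ℝ} (hx : 0 < x) :
    2 * x / (1 + x ^ 2) ^ 2 *
        (((1 + x ^ 2)⁻¹) ^ ((1 - s) / 2) * (1 - (1 + x ^ 2)⁻¹) ^ ((s - 1) / 2) /
          (‖1 - (1 + a ^ 2) * (((1 + x ^ 2)⁻¹ : ℝ) : ℂ)‖ *
            ‖1 - (1 + b ^ 2) * (((1 + x ^ 2)⁻¹ : ℝ) : ℂ)‖)) =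
      2 * (x ^ s / (‖(x : ℂ) ^ 2 - a ^ 2‖ * ‖(x : ℂ) ^ 2 - b ^ 2‖)) := by
  rw [show (1 - s) / 2 = -((s - 1) / 2) by ring,
    Real.inv_rpow_mul_one_sub_inv_rpow_one_add_sq hx, mul_div_cancel₀ _ two_ne_zero,
    Real.rpow_sub_one hx.ne', norm_one_sub_one_add_sq_mul_inv_one_add_sq,
    norm_one_sub_one_add_sq_mul_inv_one_add_sq]
  field_simp

theorem stmt_19 (a b : ℂ) (ha : a.im ≠ 0) (hb : b.im ≠ 0) (s : ℝ)
    (hs1 : -1 < s) (hs3 : s < 3) (hs : s ≠ 1) :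
    (∫ x in Set.Ioi (0:ℝ),
        (x : ℂ) ^ (s : ℂ) /
          (((x : ℂ)^2 - a^2) * ((x : ℂ)^2 - (starRingEnd ℂ a)^2) *
            ((x : ℂ)^2 - b^2) * ((x : ℂ)^2 - (starRingEnd ℂ b)^2)) ^ ((1:ℂ)/2)) =
      ((π * (1 - s) / (4 * Real.cos (π * s / 2)) : ℝ) : ℂ) *
        FD4C (((3 - s)/2 : ℝ) : ℂ) (1/2) (1/2) (1/2) (1/2) 2
          (1 + a^2) (1 + (starRingEnd ℂ a)^2) (1 + b^2) (1 + (starRingEnd ℂ b)^2) := by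
  have hGamma : Complex.Gamma 2 /
        (Complex.Gamma (((3 - s) / 2 : ℝ) : ℂ) *
          Complex.Gamma (2 - (((3 - s) / 2 : ℝ) : ℂ))) =
      (((Real.Gamma (1 + (1 - s) / 2) * Real.Gamma (1 - (1 - s) / 2))⁻¹ : ℝ) : ℂ) := by
    rw [show (2 : ℂ) = ((2 : ℝ) : ℂ) by norm_num, ← Complex.ofReal_sub,
      Complex.Gamma_ofReal, Complex.Gamma_ofReal, Complex.Gamma_ofReal, Real.Gamma_two]
    push_cast
    ring_nf
  have hsin : sin (π * ((1 - s) / 2)) = cos (π * s / 2) := by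
    rw [← Real.sin_pi_div_two_sub]; ring_nf
  have hcos := Real.cos_pi_mul_div_two_ne_zero hs1 hs3 hs
  rw [setIntegral_congr_fun measurableSet_Ioi fun x (hx : 0 < x) =>
      ofReal_cpow_div_prod_sq_sub_sq_cpow_half a b hx.le s, integral_complex_ofReal,
    FD4C, intervalIntegral.integral_of_le zero_le_one,
    setIntegral_congr_fun measurableSet_Ioc fun u hu =>
      lauricella_integrand_eq ha hb s hu.1.le hu.2,
    integral_complex_ofReal, integral_Ioc_eq_integral_Ioo, integral_Ioo_zero_one_eq_integral_Ioi]
  simp only [smul_eq_mul]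
  rw [setIntegral_congr_fun measurableSet_Ioi fun x (hx : 0 < x) =>
      abs_deriv_mul_lauricella_weight_eq a b s hx, integral_const_mul, hGamma,
    Real.Gamma_one_add_mul_Gamma_one_sub (by contrapose! hs; linarith), hsin]
  have h1s : (1 : ℝ) - s ≠ 0 := sub_ne_zero.2 hs.symm
  norm_cast
  field_simp
  ring
end
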